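/- Fix reals c > 0, λs > 0, λ > 0 and α ∈ (0, 1/2). Then there exist a constant C > 0 and an integer N such that for every integer n ≥ N, setting ñ = ⌈c·n^α⌉ and D(n) = ((ñ−1)·F(n, 1) + (n−ñ+1)·F(n, n−ñ+1))/n (the average version age in the most harmful jammer configuration, with ñ−1 isolated nodes and one mini-ring of n−ñ+1 nodes), one has D(n) ≤ C·√n. That is, with Θ(n^α) jammers and α < 1/2, the average version age is O(√n), the same scaling as a ring with no jammers. -/

import Mathlib

open Finset

/-- Closed-form stationary version age of a single node in a mini-ring of `n0` gossiping
nodes cut out of a ring of `n` nodes (source rate `lamS`, per-node update rate `lam/n`,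
per-link rate `lam/2`); note `ringNodeAge lamS lam n 1 = lamS·n/lam`. -/
noncomputable def ringNodeAge (lamS lam : ℝ) (n n0 : ℕ) : ℝ :=
  (lamS / lam) *
    ((∑ j ∈ Finset.Icc 1 (n0 - 1), ∏ k ∈ Finset.Icc 1 j, 1 / ((k : ℝ) / (n : ℝ) + 1))
      + ((n : ℝ) / (n0 : ℝ)) * ∏ k ∈ Finset.Icc 1 (n0 - 1), 1 / ((k : ℝ) / (n : ℝ) + 1))

/-!
Write `P j = ∏_{k ≤ j} n / (n + k)`. Since `P (j - 1) - P j = (j / n) P j`, every term with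
`j ≥ √n` satisfies `P j ≤ √n (P (j - 1) - P j)`, so the tail of `∑ P j` telescopes to at
most `√n`, while the at most `√n` earlier terms are each `≤ 1`. Hence a mini-ring of `n0`
nodes has age at most `(lamS / lam) (2√n + n / n0)`, and its weight `n0 / n` in `D(n)`
cancels `n / n0`. With `ñ` jammers the `ñ - 1` isolated nodes contribute
`(ñ - 1) / n · F(n, 1) = (lamS / lam) (ñ - 1)`, and `ñ ≤ c n^α + 1 = O(√n)` exactly because
`α ≤ 1/2`.
-/

noncomputable def ringAgeProd (n j : ℕ) : ℝ :=
  ∏ k ∈ Icc 1 j, 1 / ((k : ℝ) / n + 1)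

section ringAgeProd

variable (n : ℕ)

lemma ringAgeProd_nonneg (j : ℕ) : 0 ≤ ringAgeProd n j :=
  prod_nonneg fun _ _ => by positivity

lemma ringAgeProd_le_one (j : ℕ) : ringAgeProd n j ≤ 1 :=
  prod_le_one (fun _ _ => by positivity) fun _ _ =>
    div_le_one_of_le₀ (le_add_of_nonneg_left (by positivity)) (by positivity)

lemma ringAgeProd_eq_succ_mul (j : ℕ) :
    ringAgeProd n j = ringAgeProd n (j + 1) * (((j + 1 : ℕ) : ℝ) / n + 1) := by
  rw [ringAgeProd, ringAgeProd, prod_Icc_succ_top (by omega), mul_assoc, one_div,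
    inv_mul_cancel₀ (by positivity), mul_one]

lemma sum_Icc_ringAgeProd_le_card (M : ℕ) : ∑ j ∈ Icc 1 M, ringAgeProd n j ≤ M := by
  simpa using sum_le_sum fun j (_ : j ∈ Icc 1 M) => ringAgeProd_le_one n j

lemma sum_Icc_ringAgeProd_le {m : ℝ} (hn : 0 < n) (hm : 0 < m) (M : ℕ) :
    ∑ j ∈ Icc 1 M, ringAgeProd n j ≤ m + n / m * (1 - ringAgeProd n M) := by
  have hn' : (0 : ℝ) < n := by exact_mod_cast hn
  induction M with
  | zero => simpa [ringAgeProd] using hm.le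
  | succ M ih =>
    by_cases hMm : ((M + 1 : ℕ) : ℝ) ≤ m
    · have := mul_nonneg (div_nonneg hn'.le hm.le) (sub_nonneg.2 (ringAgeProd_le_one n (M + 1)))
      linarith [sum_Icc_ringAgeProd_le_card n (M + 1)]
    · have hstep : ringAgeProd n (M + 1)
          ≤ n / m * (ringAgeProd n M - ringAgeProd n (M + 1)) := by
        rw [ringAgeProd_eq_succ_mul n M]
        have hM : m ≤ ((M + 1 : ℕ) : ℝ) := (not_le.1 hMm).le
        have key : n / m * (ringAgeProd n (M + 1) * (((M + 1 : ℕ) : ℝ) / n + 1)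
            - ringAgeProd n (M + 1)) = ((M + 1 : ℕ) : ℝ) / m * ringAgeProd n (M + 1) := by
          field_simp; ring
        rw [key]
        exact le_mul_of_one_le_left (ringAgeProd_nonneg n _) ((one_le_div hm).2 hM)
      rw [sum_Icc_succ_top (by omega)]
      linarith

lemma sum_Icc_ringAgeProd_le_two_mul_sqrt (hn : 0 < n) (M : ℕ) :
    ∑ j ∈ Icc 1 M, ringAgeProd n j ≤ 2 * √n := by
  have hs : 0 < √(n : ℝ) := Real.sqrt_pos.2 (by exact_mod_cast hn)
  have hsq : (n : ℝ) / √n = √n := by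
    rw [div_eq_iff hs.ne', Real.mul_self_sqrt (Nat.cast_nonneg n)]
  have := sum_Icc_ringAgeProd_le n hn hs M
  rw [hsq] at this
  nlinarith [ringAgeProd_nonneg n M]

end ringAgeProd

lemma ringNodeAge_eq (lamS lam : ℝ) (n n0 : ℕ) :
    ringNodeAge lamS lam n n0 = lamS / lam *
      (∑ j ∈ Icc 1 (n0 - 1), ringAgeProd n j + n / n0 * ringAgeProd n (n0 - 1)) :=
  rfl

lemma ringNodeAge_one (lamS lam : ℝ) (n : ℕ) : ringNodeAge lamS lam n 1 = lamS / lam * n := by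
  simp [ringNodeAge]

lemma ringNodeAge_le {lamS lam : ℝ} (hρ : 0 ≤ lamS / lam) {n : ℕ} (hn : 0 < n) (n0 : ℕ) :
    ringNodeAge lamS lam n n0 ≤ lamS / lam * (2 * √n + n / n0) := by
  rw [ringNodeAge_eq]
  gcongr
  · exact sum_Icc_ringAgeProd_le_two_mul_sqrt n hn _
  · exact mul_le_of_le_one_right (by positivity) (ringAgeProd_le_one n _)

lemma jammedRingAge_le {lamS lam : ℝ} (hρ : 0 ≤ lamS / lam) {n t : ℕ} (hn : 0 < n)
    (ht : 0 < t) :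
    (((t : ℝ) - 1) * ringNodeAge lamS lam n 1
        + ((n - t + 1 : ℕ) : ℝ) * ringNodeAge lamS lam n (n - t + 1)) / n
      ≤ lamS / lam * (t + 2 * √n) := by
  set n0 := n - t + 1
  have hn' : (0 : ℝ) < n := by exact_mod_cast hn
  have hn0 : (0 : ℝ) < n0 := by positivity
  have hn0n : (n0 : ℝ) ≤ n := by exact_mod_cast (show n0 ≤ n by omega)
  rw [div_le_iff₀ hn', ringNodeAge_one]
  calc ((t : ℝ) - 1) * (lamS / lam * n) + n0 * ringNodeAge lamS lam n n0
      ≤ ((t : ℝ) - 1) * (lamS / lam * n) + n0 * (lamS / lam * (2 * √n + n / n0)) := by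
        gcongr
        exact ringNodeAge_le hρ hn n0
    _ = lamS / lam * (t * n + 2 * √n * n0) := by field_simp; ring
    _ ≤ lamS / lam * ((t + 2 * √n) * n) :=
        mul_le_mul_of_nonneg_left (by nlinarith [Real.sqrt_nonneg n]) hρ
    _ = lamS / lam * (t + 2 * √n) * n := by ring

theorem most_harmful_jammers_age_upper_bound_small_alpha_general
    (c lamS lam α : ℝ) (hc : 0 < c) (hlamS : 0 < lamS) (hlam : 0 < lam)
    (hα2 : α < 1 / 2) :
    ∃ C : ℝ, 0 < C ∧ ∃ N : ℕ, ∀ n : ℕ, N ≤ n →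
      ((⌈c * (n : ℝ) ^ α⌉₊ - 1 : ℝ) * ringNodeAge lamS lam n 1
          + ((n - ⌈c * (n : ℝ) ^ α⌉₊ + 1 : ℕ) : ℝ)
            * ringNodeAge lamS lam n (n - ⌈c * (n : ℝ) ^ α⌉₊ + 1)) / (n : ℝ)
        ≤ C * Real.sqrt n := by
  refine ⟨lamS / lam * (c + 3), by positivity, 1, fun n hn => ?_⟩
  have hn1 : (1 : ℝ) ≤ n := by exact_mod_cast hn
  have hs : 1 ≤ √(n : ℝ) := Real.one_le_sqrt.2 hn1
  have hpow : (n : ℝ) ^ α ≤ √n := by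
    rw [Real.sqrt_eq_rpow]
    exact Real.rpow_le_rpow_of_exponent_le hn1 hα2.le
  have hjammers : (⌈c * (n : ℝ) ^ α⌉₊ : ℝ) ≤ c * √n + 1 :=
    (Nat.ceil_lt_add_one (by positivity)).le.trans (by gcongr)
  calc _ ≤ lamS / lam * (⌈c * (n : ℝ) ^ α⌉₊ + 2 * √n) :=
        jammedRingAge_le (by positivity) hn (Nat.ceil_pos.2 (by positivity))
    _ ≤ lamS / lam * ((c + 3) * √n) := by gcongr; nlinarith
    _ = lamS / lam * (c + 3) * √n := by ring

/-- With `ñ = ⌈c·n^α⌉` jammers in the most harmful configuration (`ñ - 1` isolated nodes and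
one mini-ring of `n - ñ + 1` nodes) and `α ∈ (0, 1/2)`, the average version age
`D(n) = ((ñ-1)·F(n,1) + (n-ñ+1)·F(n, n-ñ+1))/n` is `O(√n)`: `D(n) ≤ C·√n` for large `n`,
the same scaling as a ring with no jammers. -/
theorem most_harmful_jammers_age_upper_bound_small_alpha
    (c lamS lam α : ℝ) (hc : 0 < c) (hlamS : 0 < lamS) (hlam : 0 < lam)
    (hα1 : 0 < α) (hα2 : α < 1 / 2) :
    ∃ C : ℝ, 0 < C ∧ ∃ N : ℕ, ∀ n : ℕ, N ≤ n →
      ((⌈c * (n : ℝ) ^ α⌉₊ - 1 : ℝ) * ringNodeAge lamS lam n 1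
          + ((n - ⌈c * (n : ℝ) ^ α⌉₊ + 1 : ℕ) : ℝ)
            * ringNodeAge lamS lam n (n - ⌈c * (n : ℝ) ^ α⌉₊ + 1)) / (n : ℝ)
        ≤ C * Real.sqrt n :=
  most_harmful_jammers_age_upper_bound_small_alpha_general c lamS lam α hc hlamS hlam hα2
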